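/- Let A be a Hopf algebra over ℂ with bijective antipode, and let (B,P) be a nested pair of quantum homogeneous A-spaces (i.e. B ⊆ P ⊆ A are both quantum homogeneous A-spaces). Then P is faithfully flat as a right B-module. -/

import Mathlib

open TensorProduct

noncomputable section

namespace QHS

variable (A : Type) [Ring A] [HopfAlgebra ℂ A]

/-- `B` is a left coideal of `A`: `Δ(B) ⊆ A ⊗ B`. -/
def IsLeftCoideal (B : Subalgebra ℂ A) : Prop :=
  ∀ b ∈ B, Coalgebra.comul (R := ℂ) b ∈
    LinearMap.range (TensorProduct.map (LinearMap.id : A →ₗ[ℂ] A) B.toSubmodule.subtype)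

/-- The right ideal `B⁺A` generated by the augmentation ideal `B⁺ = B ∩ ker ε`. -/
def augL (B : Subalgebra ℂ A) : Submodule ℂ A :=
  Submodule.span ℂ {x | ∃ b a : A, b ∈ B ∧ Coalgebra.counit (R := ℂ) b = 0 ∧ x = b * a}

/-- The left ideal `AB⁺` generated by the augmentation ideal `B⁺ = B ∩ ker ε`. -/
def augR (B : Subalgebra ℂ A) : Submodule ℂ A :=
  Submodule.span ℂ {x | ∃ b a : A, b ∈ B ∧ Coalgebra.counit (R := ℂ) b = 0 ∧ x = a * b}

variable {A} in
/-- The relations defining the balanced tensor product `P ⊗_B M`, for `B ⊆ P` subalgebras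
of `A` and `M` a left `B`-module. -/
def relRels {B P : Subalgebra ℂ A} (h : B ≤ P) (M : Type) [AddCommGroup M] [Module ℂ M]
    [Module (↥B) M] [IsScalarTower ℂ (↥B) M] : Submodule ℂ (↥P ⊗[ℂ] M) :=
  Submodule.span ℂ {x | ∃ (p : ↥P) (b : ↥B) (m : M),
    x = (p * Subalgebra.inclusion h b) ⊗ₜ[ℂ] m - p ⊗ₜ[ℂ] (b • m)}

variable {A} in
/-- The balanced tensor product `P ⊗_B M` of the right `B`-module `P` with a left
`B`-module `M`. -/
def RelT {B P : Subalgebra ℂ A} (h : B ≤ P) (M : Type) [AddCommGroup M] [Module ℂ M]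
    [Module (↥B) M] [IsScalarTower ℂ (↥B) M] : Type :=
  (↥P ⊗[ℂ] M) ⧸ relRels h M

variable {A} in
instance {B P : Subalgebra ℂ A} (h : B ≤ P) (M : Type) [AddCommGroup M] [Module ℂ M]
    [Module (↥B) M] [IsScalarTower ℂ (↥B) M] : AddCommGroup (RelT h M) :=
  inferInstanceAs (AddCommGroup ((↥P ⊗[ℂ] M) ⧸ relRels h M))

variable {A} in
instance {B P : Subalgebra ℂ A} (h : B ≤ P) (M : Type) [AddCommGroup M] [Module ℂ M]
    [Module (↥B) M] [IsScalarTower ℂ (↥B) M] : Module ℂ (RelT h M) :=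
  inferInstanceAs (Module ℂ ((↥P ⊗[ℂ] M) ⧸ relRels h M))

variable {A} in
/-- The map `P ⊗_B M → P ⊗_B N` induced by a `B`-module map `f : M → N`
(functoriality of `P ⊗_B -`). -/
def RelT.map {B P : Subalgebra ℂ A} (h : B ≤ P)
    {M N : Type} [AddCommGroup M] [Module ℂ M] [Module (↥B) M] [IsScalarTower ℂ (↥B) M]
    [AddCommGroup N] [Module ℂ N] [Module (↥B) N] [IsScalarTower ℂ (↥B) N]
    (f : M →ₗ[↥B] N) : RelT h M →ₗ[ℂ] RelT h N :=
  Submodule.mapQ (relRels h M) (relRels h N)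
    (TensorProduct.map (LinearMap.id : ↥P →ₗ[ℂ] ↥P) (f.restrictScalars ℂ))
    (by
      rw [relRels, Submodule.span_le]
      rintro x ⟨p, b, m, rfl⟩
      have : TensorProduct.map (LinearMap.id : ↥P →ₗ[ℂ] ↥P) (f.restrictScalars ℂ)
          ((p * Subalgebra.inclusion h b) ⊗ₜ[ℂ] m - p ⊗ₜ[ℂ] (b • m))
          = (p * Subalgebra.inclusion h b) ⊗ₜ[ℂ] (f m) - p ⊗ₜ[ℂ] (b • f m) := by
        simp [map_smul]
      simp only [SetLike.mem_coe, Submodule.mem_comap, this]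
      exact Submodule.subset_span ⟨p, b, f m, rfl⟩)

/-- `P` is faithfully flat as a **right** `B`-module: the functor `P ⊗_B -` from left
`B`-modules to vector spaces preserves and reflects exact sequences. -/
def IsFaithfullyFlatRightOver (B P : Subalgebra ℂ A) (h : B ≤ P) : Prop :=
  ∀ (M N L : Type) [AddCommGroup M] [Module ℂ M] [Module (↥B) M] [IsScalarTower ℂ (↥B) M]
    [AddCommGroup N] [Module ℂ N] [Module (↥B) N] [IsScalarTower ℂ (↥B) N]
    [AddCommGroup L] [Module ℂ L] [Module (↥B) L] [IsScalarTower ℂ (↥B) L]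
    (f : M →ₗ[↥B] N) (g : N →ₗ[↥B] L),
    Function.Exact f g ↔ Function.Exact (RelT.map h f) (RelT.map h g)

/-- A quantum homogeneous `A`-space: a left coideal subalgebra `B ⊆ A` such that `A` is
faithfully flat as a right `B`-module and `B⁺A = AB⁺`. -/
structure IsQuantumHomogeneousSpace (B : Subalgebra ℂ A) : Prop where
  leftCoideal : IsLeftCoideal A B
  faithfullyFlat : IsFaithfullyFlatRightOver A B ⊤ le_top
  augEq : augL A B = augR A B

end QHS

/-!
Tensor products compose: for subalgebras `B ≤ P ≤ Q` there is an isomorphism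
`Q ⊗_P (P ⊗_B M) ≃ Q ⊗_B M`, natural in the left `B`-module `M`. Hence a sequence of
`B`-modules becomes exact after `Q ⊗_B -` iff its image under `P ⊗_B -` becomes exact after
`Q ⊗_P -`. If `Q` is faithfully flat over both `B` and `P`, the first condition is exactness of
the sequence and the second is exactness of its image under `P ⊗_B -`. Apply this with `Q = A`.
-/

namespace QHS

namespace RelT

section Basic

variable {A : Type} [Ring A] [HopfAlgebra ℂ A] {B P : Subalgebra ℂ A} (h : B ≤ P)
  (M : Type) [AddCommGroup M] [Module ℂ M] [Module B M] [IsScalarTower ℂ B M]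

def mk : P ⊗[ℂ] M →ₗ[ℂ] RelT h M := (relRels h M).mkQ

variable {h M}

theorem mk_surjective : Function.Surjective (mk h M) := Submodule.mkQ_surjective _

theorem mk_mul_inclusion_tmul (p : P) (b : B) (m : M) :
    mk h M ((p * Subalgebra.inclusion h b) ⊗ₜ m) = mk h M (p ⊗ₜ (b • m)) := by
  rw [← sub_eq_zero, ← map_sub]
  exact (Submodule.Quotient.mk_eq_zero _).mpr (Submodule.subset_span ⟨p, b, m, rfl⟩)

@[elab_as_elim]
theorem induction_on {motive : RelT h M → Prop} (x : RelT h M) (zero : motive 0)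
    (tmul : ∀ p m, motive (mk h M (p ⊗ₜ m)))
    (add : ∀ x y, motive x → motive y → motive (x + y)) : motive x := by
  obtain ⟨y, rfl⟩ := mk_surjective x
  induction y using TensorProduct.induction_on with
  | zero => simpa using zero
  | tmul p m => exact tmul p m
  | add y z hy hz => simpa using add _ _ hy hz

variable {C : Type} [AddCommGroup C] [Module ℂ C]

theorem hom_ext {F G : RelT h M →ₗ[ℂ] C}
    (hFG : ∀ p m, F (mk h M (p ⊗ₜ m)) = G (mk h M (p ⊗ₜ m))) : F = G :=
  Submodule.linearMap_qext _ (TensorProduct.ext' hFG)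

def lift (F : P →ₗ[ℂ] M →ₗ[ℂ] C)
    (hF : ∀ p b m, F (p * Subalgebra.inclusion h b) m = F p (b • m)) : RelT h M →ₗ[ℂ] C :=
  (relRels h M).liftQ (TensorProduct.lift F) <| by
    rw [relRels, Submodule.span_le]
    rintro _ ⟨p, b, m, rfl⟩
    simp [hF]

@[simp]
theorem lift_mk (F : P →ₗ[ℂ] M →ₗ[ℂ] C) (hF) (p : P) (m : M) :
    lift F hF (mk h M (p ⊗ₜ m)) = F p m :=
  rfl

variable {N : Type} [AddCommGroup N] [Module ℂ N] [Module B N] [IsScalarTower ℂ B N]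

@[simp]
theorem map_mk (f : M →ₗ[B] N) (p : P) (m : M) :
    map h f (mk h M (p ⊗ₜ m)) = mk h N (p ⊗ₜ f m) :=
  rfl

end Basic

section LeftModule

variable {A : Type} [Ring A] [HopfAlgebra ℂ A] {B P : Subalgebra ℂ A} {h : B ≤ P}
  {M : Type} [AddCommGroup M] [Module ℂ M] [Module B M] [IsScalarTower ℂ B M]

def lsmul (p : P) : RelT h M →ₗ[ℂ] RelT h M :=
  lift ((TensorProduct.mk ℂ P M).compr₂ (mk h M) ∘ₗ LinearMap.mulLeft ℂ p) fun q b m => by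
    simpa [mul_assoc] using mk_mul_inclusion_tmul (p * q) b m

instance : SMul P (RelT h M) := ⟨fun p => lsmul p⟩

@[simp]
theorem smul_mk (p q : P) (m : M) : p • mk h M (q ⊗ₜ m) = mk h M ((p * q) ⊗ₜ m) :=
  rfl

@[simp]
theorem smul_add' (p : P) (x y : RelT h M) : p • (x + y) = p • x + p • y :=
  map_add (lsmul p) x y

@[simp]
theorem smul_zero' (p : P) : p • (0 : RelT h M) = 0 :=
  map_zero (lsmul p)

instance : Module P (RelT h M) where
  one_smul x := by
    induction x using induction_on <;> simp_all
  mul_smul p q x := by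
    induction x using induction_on <;> simp_all [mul_assoc]
  smul_zero := smul_zero'
  smul_add := smul_add'
  add_smul p q x := by
    induction x using induction_on with
    | zero => simp
    | tmul q m => simp [add_mul, TensorProduct.add_tmul]
    | add x y hx hy => simp only [smul_add', hx, hy]; abel
  zero_smul x := by
    induction x using induction_on <;> simp_all

instance : IsScalarTower ℂ P (RelT h M) where
  smul_assoc c p x := by
    induction x using induction_on with
    | zero => simp
    | tmul q m => rw [smul_mk, smul_mk, ← map_smul, TensorProduct.smul_tmul', smul_mul_assoc]
    | add x y hx hy => simp [hx, hy]

variable {N : Type} [AddCommGroup N] [Module ℂ N] [Module B N] [IsScalarTower ℂ B N]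

theorem map_smul (f : M →ₗ[B] N) (p : P) (x : RelT h M) :
    map h f (p • x) = p • map h f x := by
  induction x using induction_on <;> simp_all

def mapₗ (f : M →ₗ[B] N) : RelT h M →ₗ[P] RelT h N :=
  { map h f with map_smul' := map_smul f }

end LeftModule

section Assoc

variable {A : Type} [Ring A] [HopfAlgebra ℂ A] {B P Q : Subalgebra ℂ A} (hBP : B ≤ P)
  (hPQ : P ≤ Q) (M : Type) [AddCommGroup M] [Module ℂ M] [Module B M] [IsScalarTower ℂ B M]

def inclusion : RelT hBP M →ₗ[ℂ] RelT (hBP.trans hPQ) M :=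
  lift ((TensorProduct.mk ℂ Q M).compr₂ (mk _ M) ∘ₗ (Subalgebra.inclusion hPQ).toLinearMap)
    fun p b m => by
      simpa [Subalgebra.inclusion_inclusion] using
        mk_mul_inclusion_tmul (h := hBP.trans hPQ) (Subalgebra.inclusion hPQ p) b m

variable {hBP hPQ M}

@[simp]
theorem inclusion_mk (p : P) (m : M) :
    inclusion hBP hPQ M (mk hBP M (p ⊗ₜ m)) = mk _ M (Subalgebra.inclusion hPQ p ⊗ₜ m) :=
  rfl

theorem inclusion_smul (p : P) (x : RelT hBP M) :
    inclusion hBP hPQ M (p • x) = Subalgebra.inclusion hPQ p • inclusion hBP hPQ M x := by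
  induction x using induction_on <;> simp_all [smul_add]

theorem hom_ext₂ {C : Type} [AddCommGroup C] [Module ℂ C]
    {F G : RelT hPQ (RelT hBP M) →ₗ[ℂ] C}
    (hFG : ∀ a p m, F (mk hPQ _ (a ⊗ₜ mk hBP M (p ⊗ₜ m))) =
      G (mk hPQ _ (a ⊗ₜ mk hBP M (p ⊗ₜ m)))) : F = G :=
  hom_ext fun a x => LinearMap.congr_fun
    (hom_ext (F := F ∘ₗ mk hPQ _ ∘ₗ TensorProduct.mk ℂ Q _ a)
      (G := G ∘ₗ mk hPQ _ ∘ₗ TensorProduct.mk ℂ Q _ a) (hFG a)) x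

variable (hBP hPQ M)

-- `a ⊗ (p ⊗ m) ↦ a p ⊗ m`, with inverse `a ⊗ m ↦ a ⊗ (1 ⊗ m)`.
def assoc : RelT hPQ (RelT hBP M) ≃ₗ[ℂ] RelT (hBP.trans hPQ) M :=
  LinearEquiv.ofLinearMap
    (lift (LinearMap.mk₂ ℂ (fun a x => a • inclusion hBP hPQ M x)
        (fun _ _ _ => add_smul ..) (fun _ _ _ => smul_assoc ..)
        (fun _ _ _ => by rw [_root_.map_add, smul_add])
        (fun _ _ _ => by rw [_root_.map_smul, smul_comm]))
      fun a p x => by simp [inclusion_smul, mul_smul])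
    (lift (((TensorProduct.mk ℂ Q _).compr₂ (mk hPQ _)).compl₂
        (mk hBP M ∘ₗ TensorProduct.mk ℂ P M 1)) fun a b m => by
      simpa [← mk_mul_inclusion_tmul] using mk_mul_inclusion_tmul (h := hPQ) a
        (Subalgebra.inclusion hBP b) (mk hBP M (1 ⊗ₜ m)))
    (hom_ext fun a m => by simp)
    (hom_ext₂ fun a p m => by
      simpa using (mk_mul_inclusion_tmul (h := hPQ) a p (mk hBP M (1 ⊗ₜ m))))

variable {hBP hPQ M}

@[simp]
theorem assoc_mk (a : Q) (p : P) (m : M) :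
    assoc hBP hPQ M (mk hPQ _ (a ⊗ₜ mk hBP M (p ⊗ₜ m))) =
      mk _ M ((a * Subalgebra.inclusion hPQ p) ⊗ₜ m) := by
  simp [assoc]

theorem map_comp_assoc {N : Type} [AddCommGroup N] [Module ℂ N] [Module B N]
    [IsScalarTower ℂ B N] (f : M →ₗ[B] N) :
    map _ f ∘ₗ (assoc hBP hPQ M).toLinearMap =
      (assoc hBP hPQ N).toLinearMap ∘ₗ map hPQ (mapₗ f) :=
  hom_ext₂ fun a p m => by simp [mapₗ]

end Assoc

end RelT

theorem IsFaithfullyFlatRightOver.of_tower {A : Type} [Ring A] [HopfAlgebra ℂ A]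
    {B P Q : Subalgebra ℂ A} (hBP : B ≤ P) (hPQ : P ≤ Q)
    (hQB : IsFaithfullyFlatRightOver A B Q (hBP.trans hPQ))
    (hQP : IsFaithfullyFlatRightOver A P Q hPQ) :
    IsFaithfullyFlatRightOver A B P hBP := by
  intro M N L _ _ _ _ _ _ _ _ _ _ _ _ f g
  calc Function.Exact f g
      ↔ Function.Exact (RelT.map _ f) (RelT.map _ g) := hQB M N L f g
    _ ↔ Function.Exact (RelT.map hPQ (RelT.mapₗ f)) (RelT.map hPQ (RelT.mapₗ g)) :=
      Function.Exact.iff_of_ladder_linearEquiv (RelT.map_comp_assoc f) (RelT.map_comp_assoc g)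
    _ ↔ Function.Exact (RelT.mapₗ f) (RelT.mapₗ g) := (hQP _ _ _ _ _).symm

end QHS

open QHS

theorem nested_pair_faithfully_flat_general
    (A : Type) [Ring A] [HopfAlgebra ℂ A]
    (B P : Subalgebra ℂ A) (hBP : B ≤ P)
    (hB : IsQuantumHomogeneousSpace A B) (hP : IsQuantumHomogeneousSpace A P) :
    IsFaithfullyFlatRightOver A B P hBP :=
  IsFaithfullyFlatRightOver.of_tower hBP le_top hB.faithfullyFlat hP.faithfullyFlat

/-- For `A` a Hopf algebra (over `ℂ`, with bijective antipode) and `(B, P)`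
a nested pair of quantum homogeneous `A`-spaces, `P` is faithfully flat as a right
`B`-module. -/
theorem nested_pair_faithfully_flat
    (A : Type) [Ring A] [HopfAlgebra ℂ A]
    (hS : Function.Bijective (HopfAlgebra.antipode (R := ℂ) (A := A)))
    (B P : Subalgebra ℂ A) (hBP : B ≤ P)
    (hB : IsQuantumHomogeneousSpace A B) (hP : IsQuantumHomogeneousSpace A P) :
    IsFaithfullyFlatRightOver A B P hBP :=
  nested_pair_faithfully_flat_general A B P hBP hB hP
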